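/- Let A, B, C₁, C₂ ∈ ℝ^{3×3} with B invertible, let p, p_d : ℝ → ℝ³ be twice differentiable, v, w, ũ : ℝ → ℝ³, and let ψ(t) denote the third component of p(t). Suppose the system satisfies ṗ(t) = J(ψ(t)) v(t) and v̇(t) = −A v(t) + B ũ(t) + w(t) for all t, where J(ψ) = [[cos ψ, −sin ψ, 0], [sin ψ, cos ψ, 0], [0, 0, 1]]. Define e₁ := p − p_d, e₂ := ṗ + C₁ e₁ − ṗ_d, and suppose the control input is chosen as ũ(t) = −B⁻¹ J(ψ(t))⁻¹ [ C₂ e₂(t) + e₁(t) − C₁² e₁(t) + C₁ e₂(t) + ( v₃(t) · S₀ J(ψ(t)) − J(ψ(t)) A ) v(t) − p̈_d(t) + J(ψ(t)) w(t) ], where v₃ is the third component of v and S₀ = [[0, −1, 0], [1, 0, 0], [0, 0, 0]]. Then e₂ is differentiable and ė₂(t) = −C₂ e₂(t) − e₁(t) for all t. -/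

import Mathlib

/-! Differentiating `ṗ = J(ψ) v` gives `p̈ = ψ̇ S₀ J(ψ) v + J(ψ) v̇`, with `ψ̇ = v₃` because the
last row of `J(ψ)` is `(0, 0, 1)`. In `ė₂ = p̈ + C₁ ė₁ − p̈_d`, substituting `v̇ = −A v + B ũ + w`
makes `J(ψ) B` meet `B⁻¹ J(ψ)⁻¹` in the feedback law (`det J(ψ) = 1`), which then cancels every
term except `−C₂ e₂ − e₁`. -/

open Matrix

/-- The transformation matrix from hull-fixed to earth-fixed coordinates. -/
noncomputable def Jmat (ψ : ℝ) : Matrix (Fin 3) (Fin 3) ℝ :=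
  !![Real.cos ψ, -Real.sin ψ, 0;
     Real.sin ψ,  Real.cos ψ, 0;
     0,           0,          1]

/-- The matrix `S₀` with `dJ/dψ = S₀ J(ψ)`. -/
def S₀ : Matrix (Fin 3) (Fin 3) ℝ :=
  !![0, -1, 0;
     1,  0, 0;
     0,  0, 0]

section MulVecDeriv

variable {𝕜 : Type*} [NontriviallyNormedField 𝕜] {m n : Type*} [Fintype n]
  {M : 𝕜 → Matrix m n 𝕜} {M' : Matrix m n 𝕜} {v : 𝕜 → n → 𝕜} {v' : n → 𝕜} {t : 𝕜}

theorem HasDerivAt.matrix_mulVec (hM : ∀ i j, HasDerivAt (fun s => M s i j) (M' i j) t)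
    (hv : HasDerivAt v v' t) :
    HasDerivAt (fun s => M s *ᵥ v s) (M' *ᵥ v t + M t *ᵥ v') t := by
  rw [hasDerivAt_pi] at hv ⊢
  intro i
  simp only [Pi.add_apply, mulVec, dotProduct, ← Finset.sum_add_distrib]
  exact HasDerivAt.fun_sum fun j _ => (hM i j).mul (hv j)

theorem HasDerivAt.const_mulVec (A : Matrix m n 𝕜) (hv : HasDerivAt v v' t) :
    HasDerivAt (fun s => A *ᵥ v s) (A *ᵥ v') t := by
  simpa using (HasDerivAt.matrix_mulVec (M' := 0) (fun i j => hasDerivAt_const t (A i j)) hv)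

end MulVecDeriv

theorem det_Jmat (ψ : ℝ) : (Jmat ψ).det = 1 := by
  simp [Jmat, det_fin_three, ← sq]

theorem Jmat_mulVec_apply_two (ψ : ℝ) (x : Fin 3 → ℝ) : (Jmat ψ *ᵥ x) 2 = x 2 := by
  simp [Jmat, mulVec, dotProduct, Fin.sum_univ_three]

theorem hasDerivAt_Jmat_apply (ψ : ℝ) (i j : Fin 3) :
    HasDerivAt (fun φ => Jmat φ i j) ((S₀ * Jmat ψ) i j) ψ := by
  fin_cases i <;> fin_cases j <;>
    simp [Jmat, S₀, mul_apply, Fin.sum_univ_three, Real.hasDerivAt_sin, Real.hasDerivAt_cos,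
      hasDerivAt_const, (Real.hasDerivAt_sin ψ).fun_neg]

theorem HasDerivAt.Jmat_mulVec {ψ : ℝ → ℝ} {ψ' t : ℝ} {v : ℝ → Fin 3 → ℝ} {v' : Fin 3 → ℝ}
    (hψ : HasDerivAt ψ ψ' t) (hv : HasDerivAt v v' t) :
    HasDerivAt (fun s => Jmat (ψ s) *ᵥ v s)
      ((ψ' • (S₀ * Jmat (ψ t))) *ᵥ v t + Jmat (ψ t) *ᵥ v') t := by
  refine HasDerivAt.matrix_mulVec (fun i j => ?_) hv
  rw [Matrix.smul_apply, smul_eq_mul, mul_comm]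
  exact (hasDerivAt_Jmat_apply (ψ t) i j).comp t hψ

theorem Matrix.mulVec_nonsing_inv_mulVec {n α : Type*} [Fintype n] [DecidableEq n] [CommRing α]
    {M : Matrix n n α} (h : IsUnit M.det) (x : n → α) : M *ᵥ (M⁻¹ *ᵥ x) = x := by
  rw [mulVec_mulVec, mul_nonsing_inv _ h, one_mulVec]

theorem backstepping_second_error_dynamics_general
    (A B C₁ C₂ : Matrix (Fin 3) (Fin 3) ℝ) (hB : IsUnit B)
    (p pd v w u : ℝ → Fin 3 → ℝ)
    (hp : Differentiable ℝ p)
    (hpd : Differentiable ℝ pd) (hpd' : Differentiable ℝ (deriv pd))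
    (hkin : ∀ t : ℝ, deriv p t = (Jmat (p t 2)).mulVec (v t))
    (hdyn : ∀ t : ℝ, HasDerivAt v (-A.mulVec (v t) + B.mulVec (u t) + w t) t)
    (hu : ∀ t : ℝ, u t =
      -(B⁻¹).mulVec ((Jmat (p t 2))⁻¹.mulVec
        (C₂.mulVec (deriv p t + C₁.mulVec (p t - pd t) - deriv pd t)
          + (p t - pd t)
          - (C₁ * C₁).mulVec (p t - pd t)
          + C₁.mulVec (deriv p t + C₁.mulVec (p t - pd t) - deriv pd t)
          + ((v t 2) • (S₀ * Jmat (p t 2)) - Jmat (p t 2) * A).mulVec (v t)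
          - deriv (deriv pd) t
          + (Jmat (p t 2)).mulVec (w t)))) :
    let e₁ : ℝ → Fin 3 → ℝ := fun t => p t - pd t
    let e₂ : ℝ → Fin 3 → ℝ := fun t => deriv p t + C₁.mulVec (e₁ t) - deriv pd t
    Differentiable ℝ e₂ ∧ ∀ t : ℝ, deriv e₂ t = -C₂.mulVec (e₂ t) - e₁ t := by
  intro e₁ e₂
  have hψ (t : ℝ) : HasDerivAt (fun s => p s 2) (v t 2) t := by
    simpa [hkin t, Jmat_mulVec_apply_two] using hasDerivAt_pi.mp (hp t).hasDerivAt 2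
  have hp'' (t : ℝ) : HasDerivAt (deriv p) _ t := funext hkin ▸ (hψ t).Jmat_mulVec (hdyn t)
  have he₂ (t : ℝ) : HasDerivAt e₂ _ t := ((hp'' t).add
    (((hp t).hasDerivAt.sub (hpd t).hasDerivAt).const_mulVec C₁)).sub (hpd' t).hasDerivAt
  refine ⟨fun t => (he₂ t).differentiableAt, fun t => ?_⟩
  rw [(he₂ t).deriv, hu t]
  simp only [mulVec_neg, mulVec_add, mulVec_nonsing_inv_mulVec (B.isUnit_iff_isUnit_det.mp hB),
    mulVec_nonsing_inv_mulVec (by simp [det_Jmat] : IsUnit (Jmat (p t 2)).det)]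
  simp only [e₂, e₁, mulVec_add, mulVec_sub, sub_mulVec, smul_mulVec, ← mulVec_mulVec]
  abel

/-- Backstepping verification step: for the ship dynamics `ṗ = J(ψ)v`,
`v̇ = −Av + Bũ + w` (with `ψ` the third component of `p`), under the stated backstepping
feedback law for `ũ`, the second error variable `e₂ := ṗ + C₁ e₁ − ṗ_d` (with
`e₁ := p − p_d`) is differentiable and satisfies `ė₂ = −C₂ e₂ − e₁`. -/
theorem backstepping_second_error_dynamics
    (A B C₁ C₂ : Matrix (Fin 3) (Fin 3) ℝ) (hB : IsUnit B)
    (p pd v w u : ℝ → Fin 3 → ℝ)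
    (hp : Differentiable ℝ p) (hp' : Differentiable ℝ (deriv p))
    (hpd : Differentiable ℝ pd) (hpd' : Differentiable ℝ (deriv pd))
    (hkin : ∀ t : ℝ, deriv p t = (Jmat (p t 2)).mulVec (v t))
    (hdyn : ∀ t : ℝ, HasDerivAt v (-A.mulVec (v t) + B.mulVec (u t) + w t) t)
    (hu : ∀ t : ℝ, u t =
      -(B⁻¹).mulVec ((Jmat (p t 2))⁻¹.mulVec
        (C₂.mulVec (deriv p t + C₁.mulVec (p t - pd t) - deriv pd t)
          + (p t - pd t)
          - (C₁ * C₁).mulVec (p t - pd t)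
          + C₁.mulVec (deriv p t + C₁.mulVec (p t - pd t) - deriv pd t)
          + ((v t 2) • (S₀ * Jmat (p t 2)) - Jmat (p t 2) * A).mulVec (v t)
          - deriv (deriv pd) t
          + (Jmat (p t 2)).mulVec (w t)))) :
    let e₁ : ℝ → Fin 3 → ℝ := fun t => p t - pd t
    let e₂ : ℝ → Fin 3 → ℝ := fun t => deriv p t + C₁.mulVec (e₁ t) - deriv pd t
    Differentiable ℝ e₂ ∧ ∀ t : ℝ, deriv e₂ t = -C₂.mulVec (e₂ t) - e₁ t :=
  backstepping_second_error_dynamics_general A B C₁ C₂ hB p pd v w u hp hpd hpd' hkin hdyn hu
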